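/- arXiv:2101.05559 — 3 statements merged into one kernel-verified Lean document; each statement's English description precedes it below -/
import Mathlib

section
/- Let Q(x,a,b), P(a,x,y) be smooth functions satisfying y ≡ Q(x,a,P(a,x,y)) identically, with Q_b nowhere zero. Then for all indices i, j, the identity (−Q_b Q_{x_i a_j} + Q_{a_j} Q_{x_i b})/(Q_b Q_b) = −P_y · (−P_y P_{x_i a_j} + P_{x_i} P_{a_j y})/(P_y P_y) holds at corresponding points. Consequently the n×m matrix Levi_par(Q) with entries (−Q_b Q_{x_i a_j} + Q_{a_j} Q_{x_i b})/(Q_b)² equals −P_y times the transpose of the m×n matrix Levi_var(P) with entries (−P_y P_{a_j x_i} + P_{x_i} P_{a_j y})/(P_y)², so both matrices have the same rank. -/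
/-- Partial derivative in the `i`-th coordinate direction. -/
noncomputable def pdAt {k : ℕ} (i : Fin k) (f : (Fin k → ℝ) → ℝ) (v : Fin k → ℝ) : ℝ :=
  deriv (fun t => f (Function.update v i t)) (v i)

/-- The `n × m` Levi matrix `Levi_par(Q)` with entries
`(−Q_b Q_{x_i a_j} + Q_{a_j} Q_{x_i b})/(Q_b)²` at `(x,a,b)`. -/
noncomputable def LeviPar {n m : ℕ} (Q : (Fin n → ℝ) → (Fin m → ℝ) → ℝ → ℝ)
    (x : Fin n → ℝ) (a : Fin m → ℝ) (b : ℝ) : Matrix (Fin n) (Fin m) ℝ :=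
  Matrix.of fun i j =>
    (-(deriv (fun t => Q x a t) b) * pdAt i (fun x' => pdAt j (fun a' => Q x' a' b) a) x
      + pdAt j (fun a' => Q x a' b) a * pdAt i (fun x' => deriv (fun t => Q x' a t) b) x)
    / (deriv (fun t => Q x a t) b * deriv (fun t => Q x a t) b)

/-- The `m × n` Levi matrix `Levi_var(P)` with entries
`(−P_y P_{a_j x_i} + P_{x_i} P_{a_j y})/(P_y)²` at `(a,x,y)`. -/
noncomputable def LeviVar {n m : ℕ} (P : (Fin m → ℝ) → (Fin n → ℝ) → ℝ → ℝ)
    (a : Fin m → ℝ) (x : Fin n → ℝ) (y : ℝ) : Matrix (Fin m) (Fin n) ℝ :=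
  Matrix.of fun j i =>
    (-(deriv (fun t => P a x t) y) * pdAt j (fun a' => pdAt i (fun x' => P a' x' y) x) a
      + pdAt i (fun x' => P a x' y) x * pdAt j (fun a' => deriv (fun t => P a' x t) y) a)
    / (deriv (fun t => P a x t) y * deriv (fun t => P a x t) y)

section auxiliary

variable {E : Type*} [NormedAddCommGroup E] [NormedSpace ℝ E]

/-- Derivative of a smooth function along a differentiable curve. -/
lemma deriv_along' (f : E → ℝ) (hf : Differentiable ℝ f) {c : ℝ → E} {d : E} {t₀ : ℝ}
    (hc : HasDerivAt c d t₀) :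
    deriv (fun t => f (c t)) t₀ = fderiv ℝ f (c t₀) d :=
  ((hf (c t₀)).hasFDerivAt.comp_hasDerivAt t₀ hc).deriv

/-- Derivative of the evaluation of a CLM-valued function along a curve. -/
lemma deriv_clm_along' (G : E → (E →L[ℝ] ℝ)) (hG : Differentiable ℝ G) (w : E)
    {c : ℝ → E} {d : E} {t₀ : ℝ} (hc : HasDerivAt c d t₀) :
    deriv (fun t => G (c t) w) t₀ = fderiv ℝ G (c t₀) d w := by
  have h1 : HasDerivAt (fun t => G (c t)) (fderiv ℝ G (c t₀) d) t₀ :=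
    (hG (c t₀)).hasFDerivAt.comp_hasDerivAt t₀ hc
  exact ((ContinuousLinearMap.apply ℝ ℝ w).hasFDerivAt.comp_hasDerivAt t₀ h1).deriv

/-- Rescaling a real matrix by a nonzero scalar does not change its rank. -/
lemma rank_smul_ne' {n m : ℕ} {c : ℝ} (hc : c ≠ 0) (A : Matrix (Fin n) (Fin m) ℝ) :
    (c • A).rank = A.rank := by
  have h : c • A = (c • (1 : Matrix (Fin n) (Fin n) ℝ)) * A := by
    rw [Matrix.smul_mul, Matrix.one_mul]
  rw [h, Matrix.rank_mul_eq_right_of_isUnit_det]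
  simp [Matrix.det_smul, isUnit_iff_ne_zero, hc]

end auxiliary

set_option maxHeartbeats 2000000 in
/-- for all `i, j` the entrywise identity
`(−Q_b Q_{x_i a_j} + Q_{a_j} Q_{x_i b})/(Q_b)² = −P_y · (−P_y P_{x_i a_j} + P_{x_i} P_{a_j y})/(P_y)²`
holds at corresponding points; consequently `Levi_par(Q) = −P_y • Levi_var(P)ᵀ`, so both
matrices have the same rank. -/
theorem stmt_2 {n m : ℕ}
    (Q : (Fin n → ℝ) → (Fin m → ℝ) → ℝ → ℝ)
    (P : (Fin m → ℝ) → (Fin n → ℝ) → ℝ → ℝ)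
    (hQ : ContDiff ℝ (⊤ : ℕ∞) (fun p : ((Fin n → ℝ) × (Fin m → ℝ) × ℝ) => Q p.1 p.2.1 p.2.2))
    (hP : ContDiff ℝ (⊤ : ℕ∞) (fun p : ((Fin m → ℝ) × (Fin n → ℝ) × ℝ) => P p.1 p.2.1 p.2.2))
    (hQP : ∀ x a y, Q x a (P a x y) = y)
    (hQb : ∀ x a b, deriv (fun t => Q x a t) b ≠ 0) :
    ∀ (x : Fin n → ℝ) (a : Fin m → ℝ) (y : ℝ),
      (∀ (i : Fin n) (j : Fin m),
        (-(deriv (fun t => Q x a t) (P a x y))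
            * pdAt i (fun x' => pdAt j (fun a' => Q x' a' (P a x y)) a) x
          + pdAt j (fun a' => Q x a' (P a x y)) a
            * pdAt i (fun x' => deriv (fun t => Q x' a t) (P a x y)) x)
          / (deriv (fun t => Q x a t) (P a x y) * deriv (fun t => Q x a t) (P a x y))
        = -(deriv (fun t => P a x t) y) *
          ((-(deriv (fun t => P a x t) y)
              * pdAt i (fun x' => pdAt j (fun a' => P a' x' y) a) x
            + pdAt i (fun x' => P a x' y) x
              * pdAt j (fun a' => deriv (fun t => P a' x t) y) a)
          / (deriv (fun t => P a x t) y * deriv (fun t => P a x t) y))) ∧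
      LeviPar Q x a (P a x y) = (-(deriv (fun t => P a x t) y)) • Matrix.transpose (LeviVar P a x y) ∧
      (LeviPar Q x a (P a x y)).rank = (LeviVar P a x y).rank := by
  have hq1 : Differentiable ℝ (fun p : ((Fin n → ℝ) × (Fin m → ℝ) × ℝ) => Q p.1 p.2.1 p.2.2) :=
    hQ.differentiable (by simp)
  have hf1 : Differentiable ℝ (fun p : ((Fin m → ℝ) × (Fin n → ℝ) × ℝ) => P p.1 p.2.1 p.2.2) :=
    hP.differentiable (by simp)
  set q : ((Fin n → ℝ) × (Fin m → ℝ) × ℝ) → ℝ := fun p => Q p.1 p.2.1 p.2.2 with hq_def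
  set f : ((Fin m → ℝ) × (Fin n → ℝ) × ℝ) → ℝ := fun p => P p.1 p.2.1 p.2.2 with hf_def
  have hqd : ContDiff ℝ (⊤ : ℕ∞) (fderiv ℝ q) := hQ.fderiv_right (by simp)
  have hfd : ContDiff ℝ (⊤ : ℕ∞) (fderiv ℝ f) := hP.fderiv_right (by simp)
  have hq2 : Differentiable ℝ (fderiv ℝ q) := hqd.differentiable (by simp)
  have hf2 : Differentiable ℝ (fderiv ℝ f) := hfd.differentiable (by simp)
  set g : ((Fin m → ℝ) × (Fin n → ℝ) × ℝ) → ((Fin n → ℝ) × (Fin m → ℝ) × ℝ) :=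
    fun w => (w.2.1, w.1, f w) with hg_def
  have hgdiff : Differentiable ℝ g :=
    (differentiable_snd.fst).prodMk (differentiable_fst.prodMk hf1)
  -- first-order consequence of Q(x,a,P(a,x,y)) = y
  have rel1 : ∀ (w v : ((Fin m → ℝ) × (Fin n → ℝ) × ℝ)),
      fderiv ℝ q (w.2.1, w.1, P w.1 w.2.1 w.2.2) (v.2.1, v.1, fderiv ℝ f w v) = v.2.2 := by
    intro w v
    have hgF : HasFDerivAt g
        (((ContinuousLinearMap.fst ℝ (Fin n → ℝ) ℝ).comp
            (ContinuousLinearMap.snd ℝ (Fin m → ℝ) ((Fin n → ℝ) × ℝ))).prod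
          ((ContinuousLinearMap.fst ℝ (Fin m → ℝ) ((Fin n → ℝ) × ℝ)).prod (fderiv ℝ f w))) w :=
      HasFDerivAt.prodMk ((hasFDerivAt_fst).comp w (hasFDerivAt_snd))
        ((hasFDerivAt_fst).prodMk (hf1 w).hasFDerivAt)
    have hconst : (fun w : ((Fin m → ℝ) × (Fin n → ℝ) × ℝ) => q (g w)) = fun w => w.2.2 := by
      funext w
      exact hQP w.2.1 w.1 w.2.2
    have hcd : fderiv ℝ (fun w : ((Fin m → ℝ) × (Fin n → ℝ) × ℝ) => q (g w)) w =
        (ContinuousLinearMap.snd ℝ (Fin n → ℝ) ℝ).comp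
          (ContinuousLinearMap.snd ℝ (Fin m → ℝ) ((Fin n → ℝ) × ℝ)) := by
      rw [hconst]
      exact (hasFDerivAt_snd.comp w hasFDerivAt_snd).fderiv
    have hcomp : fderiv ℝ (fun w : ((Fin m → ℝ) × (Fin n → ℝ) × ℝ) => q (g w)) w =
        (fderiv ℝ q (g w)).comp (fderiv ℝ g w) :=
      fderiv_comp w (hq1 (g w)) (hgdiff w)
    have key := hcomp.symm.trans hcd
    have h2 := congrArg (fun (T : ((Fin m → ℝ) × (Fin n → ℝ) × ℝ) →L[ℝ] ℝ) => T v) key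
    simp only [ContinuousLinearMap.comp_apply, hgF.fderiv] at h2
    simpa using h2
  -- second-order consequence
  have rel2 : ∀ (w₀ u v : ((Fin m → ℝ) × (Fin n → ℝ) × ℝ)),
      fderiv ℝ (fderiv ℝ q) (w₀.2.1, w₀.1, P w₀.1 w₀.2.1 w₀.2.2)
          (u.2.1, u.1, fderiv ℝ f w₀ u)
          (v.2.1, v.1, fderiv ℝ f w₀ v)
        + fderiv ℝ q (w₀.2.1, w₀.1, P w₀.1 w₀.2.1 w₀.2.2)
          (0, 0, fderiv ℝ (fderiv ℝ f) w₀ u v) = 0 := by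
    intro w₀ u v
    set Φ : ((Fin m → ℝ) × (Fin n → ℝ) × ℝ) → ℝ :=
      fun w => fderiv ℝ q (g w) ((v.2.1, v.1, fderiv ℝ f w v) :
        ((Fin n → ℝ) × (Fin m → ℝ) × ℝ)) with hΦ_def
    have hΦconst : Φ = fun _ => v.2.2 := by
      funext w
      exact rel1 w v
    have hΦd : fderiv ℝ Φ w₀ = 0 := by rw [hΦconst]; exact fderiv_const_apply _
    set A : ((Fin m → ℝ) × (Fin n → ℝ) × ℝ) → (((Fin n → ℝ) × (Fin m → ℝ) × ℝ) →L[ℝ] ℝ) :=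
      fun w => fderiv ℝ q (g w) with hA_def
    set B : ((Fin m → ℝ) × (Fin n → ℝ) × ℝ) → ((Fin n → ℝ) × (Fin m → ℝ) × ℝ) :=
      fun w => ((v.2.1, v.1, fderiv ℝ f w v) : ((Fin n → ℝ) × (Fin m → ℝ) × ℝ)) with hB_def
    have hAd : DifferentiableAt ℝ A w₀ := (hq2.comp hgdiff).differentiableAt
    have hB3 : HasFDerivAt (fun w : ((Fin m → ℝ) × (Fin n → ℝ) × ℝ) => fderiv ℝ f w v)
        ((ContinuousLinearMap.apply ℝ ℝ v).comp (fderiv ℝ (fderiv ℝ f) w₀)) w₀ :=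
      ((ContinuousLinearMap.apply ℝ ℝ v).hasFDerivAt).comp w₀ (hf2 w₀).hasFDerivAt
    have hBF : HasFDerivAt B
        ((0 : ((Fin m → ℝ) × (Fin n → ℝ) × ℝ) →L[ℝ] (Fin n → ℝ)).prod
          ((0 : ((Fin m → ℝ) × (Fin n → ℝ) × ℝ) →L[ℝ] (Fin m → ℝ)).prod
            ((ContinuousLinearMap.apply ℝ ℝ v).comp (fderiv ℝ (fderiv ℝ f) w₀)))) w₀ :=
      (hasFDerivAt_const _ _).prodMk ((hasFDerivAt_const _ _).prodMk hB3)
    have hBd : DifferentiableAt ℝ B w₀ := hBF.differentiableAt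
    have happ : fderiv ℝ Φ w₀ = (A w₀).comp (fderiv ℝ B w₀) + (fderiv ℝ A w₀).flip (B w₀) :=
      fderiv_clm_apply hAd hBd
    have hgF : HasFDerivAt g
        (((ContinuousLinearMap.fst ℝ (Fin n → ℝ) ℝ).comp
            (ContinuousLinearMap.snd ℝ (Fin m → ℝ) ((Fin n → ℝ) × ℝ))).prod
          ((ContinuousLinearMap.fst ℝ (Fin m → ℝ) ((Fin n → ℝ) × ℝ)).prod (fderiv ℝ f w₀))) w₀ :=
      HasFDerivAt.prodMk ((hasFDerivAt_fst).comp w₀ (hasFDerivAt_snd))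
        ((hasFDerivAt_fst).prodMk (hf1 w₀).hasFDerivAt)
    have hAcomp : fderiv ℝ A w₀ = (fderiv ℝ (fderiv ℝ q) (g w₀)).comp (fderiv ℝ g w₀) :=
      fderiv_comp w₀ (hq2 (g w₀)) (hgdiff w₀)
    have hzero := congrArg
      (fun (T : ((Fin m → ℝ) × (Fin n → ℝ) × ℝ) →L[ℝ] ℝ) => T u) (hΦd.symm.trans happ)
    simp only [ContinuousLinearMap.add_apply, ContinuousLinearMap.comp_apply,
      ContinuousLinearMap.flip_apply, ContinuousLinearMap.zero_apply, hAcomp,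
      hBF.fderiv, hgF.fderiv, ContinuousLinearMap.prod_apply, ContinuousLinearMap.apply_apply,
      ContinuousLinearMap.coe_fst', ContinuousLinearMap.coe_snd',
      ContinuousLinearMap.coe_fst, ContinuousLinearMap.coe_snd] at hzero
    have hg0 : g w₀ = (w₀.2.1, w₀.1, P w₀.1 w₀.2.1 w₀.2.2) := rfl
    simp only [hA_def, hB_def, hg0] at hzero
    linarith [hzero]
  -- symmetry of the second derivative of f
  have hsym : ∀ (w₀ u v : ((Fin m → ℝ) × (Fin n → ℝ) × ℝ)),
      fderiv ℝ (fderiv ℝ f) w₀ u v = fderiv ℝ (fderiv ℝ f) w₀ v u := by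
    intro w₀ u v
    exact second_derivative_symmetric (fun w => (hf1 w).hasFDerivAt) ((hf2 w₀).hasFDerivAt) u v
  intro x a y
  -- first/inner derivative identities
  have hE7g : ∀ a' : Fin m → ℝ, deriv (fun t => P a' x t) y
      = fderiv ℝ f (a', x, y) (((0 : Fin m → ℝ), (0 : Fin n → ℝ), (1 : ℝ))) := by
    intro a'
    have hc : HasDerivAt (fun t => ((a', x, t) : (Fin m → ℝ) × (Fin n → ℝ) × ℝ))
        (0, 0, 1) y :=
      (hasDerivAt_const _ _).prodMk ((hasDerivAt_const _ _).prodMk (hasDerivAt_id _))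
    exact deriv_along' f hf1 hc
  have r1 : fderiv ℝ q (x, a, P a x y)
      (((0 : Fin n → ℝ), (0 : Fin m → ℝ),
        fderiv ℝ f (a, x, y) (((0 : Fin m → ℝ), (0 : Fin n → ℝ), (1 : ℝ))))) = 1 :=
    rel1 (a, x, y) (0, 0, 1)
  have d4 : ∀ s : ℝ, (((0 : Fin n → ℝ), (0 : Fin m → ℝ), s) : (Fin n → ℝ) × (Fin m → ℝ) × ℝ)
      = s • (((0 : Fin n → ℝ), (0 : Fin m → ℝ), (1 : ℝ))) := by
    intro s; simp
  rw [d4, map_smul, smul_eq_mul] at r1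
  have hE1g : ∀ x' : Fin n → ℝ, deriv (fun t => Q x' a t) (P a x y)
      = fderiv ℝ q (x', a, P a x y) (((0 : Fin n → ℝ), (0 : Fin m → ℝ), (1 : ℝ))) := by
    intro x'
    have hc : HasDerivAt (fun t => ((x', a, t) : (Fin n → ℝ) × (Fin m → ℝ) × ℝ))
        (0, 0, 1) (P a x y) :=
      (hasDerivAt_const _ _).prodMk ((hasDerivAt_const _ _).prodMk (hasDerivAt_id _))
    exact deriv_along' q hq1 hc
  have hQb0 : fderiv ℝ q (x, a, P a x y)
      (((0 : Fin n → ℝ), (0 : Fin m → ℝ), (1 : ℝ))) ≠ 0 := by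
    have := hQb x a (P a x y)
    rwa [hE1g x] at this
  have hPy0' : fderiv ℝ f (a, x, y) (((0 : Fin m → ℝ), (0 : Fin n → ℝ), (1 : ℝ))) ≠ 0 := by
    intro h
    rw [h, zero_mul] at r1
    exact zero_ne_one r1
  have hPy0 : deriv (fun t => P a x t) y ≠ 0 := by
    rw [hE7g a]; exact hPy0'
  have key : ∀ (i : Fin n) (j : Fin m),
      (-(deriv (fun t => Q x a t) (P a x y))
          * pdAt i (fun x' => pdAt j (fun a' => Q x' a' (P a x y)) a) x
        + pdAt j (fun a' => Q x a' (P a x y)) a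
          * pdAt i (fun x' => deriv (fun t => Q x' a t) (P a x y)) x)
        / (deriv (fun t => Q x a t) (P a x y) * deriv (fun t => Q x a t) (P a x y))
      = -(deriv (fun t => P a x t) y) *
        ((-(deriv (fun t => P a x t) y)
            * pdAt i (fun x' => pdAt j (fun a' => P a' x' y) a) x
          + pdAt i (fun x' => P a x' y) x
            * pdAt j (fun a' => deriv (fun t => P a' x t) y) a)
        / (deriv (fun t => P a x t) y * deriv (fun t => P a x t) y)) := by
    intro i j
    have hE2g : ∀ x' : Fin n → ℝ, pdAt j (fun a' => Q x' a' (P a x y)) a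
        = fderiv ℝ q (x', a, P a x y)
            (((0 : Fin n → ℝ), Pi.single j 1, (0 : ℝ))) := by
      intro x'
      have hc : HasDerivAt
          (fun t => ((x', Function.update a j t, P a x y) : (Fin n → ℝ) × (Fin m → ℝ) × ℝ))
          (0, Pi.single j 1, 0) (a j) :=
        (hasDerivAt_const _ _).prodMk ((hasDerivAt_update a j (a j)).prodMk (hasDerivAt_const _ _))
      have h := deriv_along' q hq1 hc
      simp only [Function.update_eq_self] at h
      exact h
    have hE8g : ∀ x' : Fin n → ℝ, pdAt j (fun a' => P a' x' y) a
        = fderiv ℝ f (a, x', y) (((Pi.single j 1 : Fin m → ℝ), (0 : Fin n → ℝ), (0 : ℝ))) := by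
      intro x'
      have hc : HasDerivAt
          (fun t => ((Function.update a j t, x', y) : (Fin m → ℝ) × (Fin n → ℝ) × ℝ))
          (Pi.single j 1, 0, 0) (a j) :=
        (hasDerivAt_update a j (a j)).prodMk ((hasDerivAt_const _ _).prodMk (hasDerivAt_const _ _))
      have h := deriv_along' f hf1 hc
      simp only [Function.update_eq_self] at h
      exact h
    have hE3 : pdAt i (fun x' => fderiv ℝ q (x', a, P a x y)
          (((0 : Fin n → ℝ), (0 : Fin m → ℝ), (1 : ℝ)))) x
        = fderiv ℝ (fderiv ℝ q) (x, a, P a x y) ((Pi.single i 1, (0 : Fin m → ℝ), (0 : ℝ)))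
            (((0 : Fin n → ℝ), (0 : Fin m → ℝ), (1 : ℝ))) := by
      have hc : HasDerivAt
          (fun t => ((Function.update x i t, a, P a x y) : (Fin n → ℝ) × (Fin m → ℝ) × ℝ))
          (Pi.single i 1, 0, 0) (x i) :=
        (hasDerivAt_update x i (x i)).prodMk ((hasDerivAt_const _ _).prodMk (hasDerivAt_const _ _))
      have h := deriv_clm_along' (fderiv ℝ q) hq2
        (((0 : Fin n → ℝ), (0 : Fin m → ℝ), (1 : ℝ))) hc
      simp only [Function.update_eq_self] at h
      exact h
    have hE4 : pdAt i (fun x' => fderiv ℝ q (x', a, P a x y)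
          (((0 : Fin n → ℝ), Pi.single j 1, (0 : ℝ)))) x
        = fderiv ℝ (fderiv ℝ q) (x, a, P a x y) ((Pi.single i 1, (0 : Fin m → ℝ), (0 : ℝ)))
            (((0 : Fin n → ℝ), Pi.single j 1, (0 : ℝ))) := by
      have hc : HasDerivAt
          (fun t => ((Function.update x i t, a, P a x y) : (Fin n → ℝ) × (Fin m → ℝ) × ℝ))
          (Pi.single i 1, 0, 0) (x i) :=
        (hasDerivAt_update x i (x i)).prodMk ((hasDerivAt_const _ _).prodMk (hasDerivAt_const _ _))
      have h := deriv_clm_along' (fderiv ℝ q) hq2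
        (((0 : Fin n → ℝ), Pi.single j 1, (0 : ℝ))) hc
      simp only [Function.update_eq_self] at h
      exact h
    have hE6 : pdAt i (fun x' => P a x' y) x
        = fderiv ℝ f (a, x, y) (((0 : Fin m → ℝ), Pi.single i 1, (0 : ℝ))) := by
      have hc : HasDerivAt
          (fun t => ((a, Function.update x i t, y) : (Fin m → ℝ) × (Fin n → ℝ) × ℝ))
          (0, Pi.single i 1, 0) (x i) :=
        (hasDerivAt_const _ _).prodMk ((hasDerivAt_update x i (x i)).prodMk (hasDerivAt_const _ _))
      have h := deriv_along' f hf1 hc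
      simp only [Function.update_eq_self] at h
      exact h
    have hE7 : pdAt j (fun a' => fderiv ℝ f (a', x, y)
          (((0 : Fin m → ℝ), (0 : Fin n → ℝ), (1 : ℝ)))) a
        = fderiv ℝ (fderiv ℝ f) (a, x, y) ((Pi.single j 1, (0 : Fin n → ℝ), (0 : ℝ)))
            (((0 : Fin m → ℝ), (0 : Fin n → ℝ), (1 : ℝ))) := by
      have hc : HasDerivAt
          (fun t => ((Function.update a j t, x, y) : (Fin m → ℝ) × (Fin n → ℝ) × ℝ))
          (Pi.single j 1, 0, 0) (a j) :=
        (hasDerivAt_update a j (a j)).prodMk ((hasDerivAt_const _ _).prodMk (hasDerivAt_const _ _))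
      have h := deriv_clm_along' (fderiv ℝ f) hf2
        (((0 : Fin m → ℝ), (0 : Fin n → ℝ), (1 : ℝ))) hc
      simp only [Function.update_eq_self] at h
      exact h
    have hE8 : pdAt i (fun x' => fderiv ℝ f (a, x', y)
          (((Pi.single j 1 : Fin m → ℝ), (0 : Fin n → ℝ), (0 : ℝ)))) x
        = fderiv ℝ (fderiv ℝ f) (a, x, y) (((0 : Fin m → ℝ), Pi.single i 1, (0 : ℝ)))
            (((Pi.single j 1 : Fin m → ℝ), (0 : Fin n → ℝ), (0 : ℝ))) := by
      have hc : HasDerivAt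
          (fun t => ((a, Function.update x i t, y) : (Fin m → ℝ) × (Fin n → ℝ) × ℝ))
          (0, Pi.single i 1, 0) (x i) :=
        (hasDerivAt_const _ _).prodMk ((hasDerivAt_update x i (x i)).prodMk (hasDerivAt_const _ _))
      have h := deriv_clm_along' (fderiv ℝ f) hf2
        (((Pi.single j 1 : Fin m → ℝ), (0 : Fin n → ℝ), (0 : ℝ))) hc
      simp only [Function.update_eq_self] at h
      exact h
    -- rewrite the goal into fderiv atoms
    simp only [hE1g, hE2g, hE7g, hE8g]
    rw [hE3, hE4, hE6, hE7, hE8]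
    -- instantiate relations
    have r3 : fderiv ℝ q (x, a, P a x y)
        (((0 : Fin n → ℝ), (Pi.single j 1 : Fin m → ℝ),
          fderiv ℝ f (a, x, y) (((Pi.single j 1 : Fin m → ℝ), (0 : Fin n → ℝ), (0 : ℝ))))) = 0 :=
      rel1 (a, x, y) (Pi.single j 1, 0, 0)
    have rI : fderiv ℝ (fderiv ℝ q) (x, a, P a x y)
          (((Pi.single i 1 : Fin n → ℝ), (0 : Fin m → ℝ),
            fderiv ℝ f (a, x, y) (((0 : Fin m → ℝ), Pi.single i 1, (0 : ℝ)))))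
          (((0 : Fin n → ℝ), (Pi.single j 1 : Fin m → ℝ),
            fderiv ℝ f (a, x, y) (((Pi.single j 1 : Fin m → ℝ), (0 : Fin n → ℝ), (0 : ℝ)))))
        + fderiv ℝ q (x, a, P a x y)
          (0, 0, fderiv ℝ (fderiv ℝ f) (a, x, y) (((0 : Fin m → ℝ), Pi.single i 1, (0 : ℝ)))
            (((Pi.single j 1 : Fin m → ℝ), (0 : Fin n → ℝ), (0 : ℝ)))) = 0 :=
      rel2 (a, x, y) (0, Pi.single i 1, 0) (Pi.single j 1, 0, 0)
    have rII : fderiv ℝ (fderiv ℝ q) (x, a, P a x y)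
          (((0 : Fin n → ℝ), (0 : Fin m → ℝ),
            fderiv ℝ f (a, x, y) (((0 : Fin m → ℝ), (0 : Fin n → ℝ), (1 : ℝ)))))
          (((0 : Fin n → ℝ), (Pi.single j 1 : Fin m → ℝ),
            fderiv ℝ f (a, x, y) (((Pi.single j 1 : Fin m → ℝ), (0 : Fin n → ℝ), (0 : ℝ)))))
        + fderiv ℝ q (x, a, P a x y)
          (0, 0, fderiv ℝ (fderiv ℝ f) (a, x, y) (((0 : Fin m → ℝ), (0 : Fin n → ℝ), (1 : ℝ)))
            (((Pi.single j 1 : Fin m → ℝ), (0 : Fin n → ℝ), (0 : ℝ)))) = 0 :=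
      rel2 (a, x, y) (0, 0, 1) (Pi.single j 1, 0, 0)
    have hs : fderiv ℝ (fderiv ℝ f) (a, x, y) (((0 : Fin m → ℝ), (0 : Fin n → ℝ), (1 : ℝ)))
          (((Pi.single j 1 : Fin m → ℝ), (0 : Fin n → ℝ), (0 : ℝ)))
        = fderiv ℝ (fderiv ℝ f) (a, x, y) (((Pi.single j 1 : Fin m → ℝ), (0 : Fin n → ℝ), (0 : ℝ)))
          (((0 : Fin m → ℝ), (0 : Fin n → ℝ), (1 : ℝ))) :=
      hsym (a, x, y) _ _
    rw [hs] at rII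
    -- scalar abbreviations
    set Qb := fderiv ℝ q (x, a, P a x y)
      (((0 : Fin n → ℝ), (0 : Fin m → ℝ), (1 : ℝ))) with hQb_def
    set Py := fderiv ℝ f (a, x, y) (((0 : Fin m → ℝ), (0 : Fin n → ℝ), (1 : ℝ))) with hPy_def
    set Px := fderiv ℝ f (a, x, y) (((0 : Fin m → ℝ), Pi.single i 1, (0 : ℝ))) with hPx_def
    set Pa := fderiv ℝ f (a, x, y)
      (((Pi.single j 1 : Fin m → ℝ), (0 : Fin n → ℝ), (0 : ℝ))) with hPa_def
    set Pxa := fderiv ℝ (fderiv ℝ f) (a, x, y) (((0 : Fin m → ℝ), Pi.single i 1, (0 : ℝ)))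
      (((Pi.single j 1 : Fin m → ℝ), (0 : Fin n → ℝ), (0 : ℝ))) with hPxa_def
    set Pay := fderiv ℝ (fderiv ℝ f) (a, x, y)
      (((Pi.single j 1 : Fin m → ℝ), (0 : Fin n → ℝ), (0 : ℝ)))
      (((0 : Fin m → ℝ), (0 : Fin n → ℝ), (1 : ℝ))) with hPay_def
    -- decompose the compound direction vectors
    have d1 : (((Pi.single i 1 : Fin n → ℝ), (0 : Fin m → ℝ), Px)
          : (Fin n → ℝ) × (Fin m → ℝ) × ℝ)
        = ((Pi.single i 1, 0, 0) : (Fin n → ℝ) × (Fin m → ℝ) × ℝ)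
          + Px • (((0 : Fin n → ℝ), (0 : Fin m → ℝ), (1 : ℝ))) := by
      simp [Prod.ext_iff]
    have d2 : (((0 : Fin n → ℝ), (Pi.single j 1 : Fin m → ℝ), Pa)
          : (Fin n → ℝ) × (Fin m → ℝ) × ℝ)
        = ((0, Pi.single j 1, 0) : (Fin n → ℝ) × (Fin m → ℝ) × ℝ)
          + Pa • (((0 : Fin n → ℝ), (0 : Fin m → ℝ), (1 : ℝ))) := by
      simp [Prod.ext_iff]
    rw [d1, d2] at rI
    rw [d2, d4 (fderiv ℝ f (a, x, y) (((0 : Fin m → ℝ), (0 : Fin n → ℝ), (1 : ℝ))))] at rII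
    rw [d2] at r3
    rw [d4 Pxa] at rI
    rw [d4 Pay] at rII
    simp only [map_add, map_smul, ContinuousLinearMap.add_apply,
      ContinuousLinearMap.smul_apply, smul_eq_mul] at rI rII r3
    set Qa := fderiv ℝ q (x, a, P a x y)
      (((0 : Fin n → ℝ), (Pi.single j 1 : Fin m → ℝ), (0 : ℝ))) with hQa_def
    set Qxa := fderiv ℝ (fderiv ℝ q) (x, a, P a x y)
      ((Pi.single i 1, (0 : Fin m → ℝ), (0 : ℝ)))
      (((0 : Fin n → ℝ), Pi.single j 1, (0 : ℝ))) with hQxa_def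
    set Qxb := fderiv ℝ (fderiv ℝ q) (x, a, P a x y)
      ((Pi.single i 1, (0 : Fin m → ℝ), (0 : ℝ)))
      (((0 : Fin n → ℝ), (0 : Fin m → ℝ), (1 : ℝ))) with hQxb_def
    set Qba := fderiv ℝ (fderiv ℝ q) (x, a, P a x y)
      (((0 : Fin n → ℝ), (0 : Fin m → ℝ), (1 : ℝ)))
      (((0 : Fin n → ℝ), Pi.single j 1, (0 : ℝ))) with hQba_def
    set Qbb := fderiv ℝ (fderiv ℝ q) (x, a, P a x y)
      (((0 : Fin n → ℝ), (0 : Fin m → ℝ), (1 : ℝ)))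
      (((0 : Fin n → ℝ), (0 : Fin m → ℝ), (1 : ℝ))) with hQbb_def
    have hPyPy : Py * Py ≠ 0 := mul_ne_zero hPy0' hPy0'
    have hQbQb : Qb * Qb ≠ 0 := mul_ne_zero hQb0 hQb0
    rw [mul_div_assoc', div_eq_div_iff hQbQb hPyPy]
    linear_combination (Py * Py * Qxb) * r3 - (Py * Py * Qb) * rI + (Py * Qb * Px) * rII
  have h2 : LeviPar Q x a (P a x y)
      = (-(deriv (fun t => P a x t) y)) • Matrix.transpose (LeviVar P a x y) := by
    ext i j
    simp only [LeviPar, LeviVar, Matrix.smul_apply, Matrix.transpose_apply,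
      Matrix.of_apply, smul_eq_mul]
    have hE9g : ∀ a' : Fin m → ℝ, pdAt i (fun x' => P a' x' y) x
        = fderiv ℝ f (a', x, y) (((0 : Fin m → ℝ), Pi.single i 1, (0 : ℝ))) := by
      intro a'
      have hc : HasDerivAt
          (fun t => ((a', Function.update x i t, y) : (Fin m → ℝ) × (Fin n → ℝ) × ℝ))
          (0, Pi.single i 1, 0) (x i) :=
        (hasDerivAt_const _ _).prodMk ((hasDerivAt_update x i (x i)).prodMk (hasDerivAt_const _ _))
      have h := deriv_along' f hf1 hc
      simp only [Function.update_eq_self] at h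
      exact h
    have hE8g : ∀ x' : Fin n → ℝ, pdAt j (fun a' => P a' x' y) a
        = fderiv ℝ f (a, x', y) (((Pi.single j 1 : Fin m → ℝ), (0 : Fin n → ℝ), (0 : ℝ))) := by
      intro x'
      have hc : HasDerivAt
          (fun t => ((Function.update a j t, x', y) : (Fin m → ℝ) × (Fin n → ℝ) × ℝ))
          (Pi.single j 1, 0, 0) (a j) :=
        (hasDerivAt_update a j (a j)).prodMk ((hasDerivAt_const _ _).prodMk (hasDerivAt_const _ _))
      have h := deriv_along' f hf1 hc
      simp only [Function.update_eq_self] at h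
      exact h
    have hE9 : pdAt j (fun a' => fderiv ℝ f (a', x, y)
          (((0 : Fin m → ℝ), Pi.single i 1, (0 : ℝ)))) a
        = fderiv ℝ (fderiv ℝ f) (a, x, y) ((Pi.single j 1, (0 : Fin n → ℝ), (0 : ℝ)))
            (((0 : Fin m → ℝ), Pi.single i 1, (0 : ℝ))) := by
      have hc : HasDerivAt
          (fun t => ((Function.update a j t, x, y) : (Fin m → ℝ) × (Fin n → ℝ) × ℝ))
          (Pi.single j 1, 0, 0) (a j) :=
        (hasDerivAt_update a j (a j)).prodMk ((hasDerivAt_const _ _).prodMk (hasDerivAt_const _ _))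
      have h := deriv_clm_along' (fderiv ℝ f) hf2
        (((0 : Fin m → ℝ), Pi.single i 1, (0 : ℝ))) hc
      simp only [Function.update_eq_self] at h
      exact h
    have hE8 : pdAt i (fun x' => fderiv ℝ f (a, x', y)
          (((Pi.single j 1 : Fin m → ℝ), (0 : Fin n → ℝ), (0 : ℝ)))) x
        = fderiv ℝ (fderiv ℝ f) (a, x, y) (((0 : Fin m → ℝ), Pi.single i 1, (0 : ℝ)))
            (((Pi.single j 1 : Fin m → ℝ), (0 : Fin n → ℝ), (0 : ℝ))) := by
      have hc : HasDerivAt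
          (fun t => ((a, Function.update x i t, y) : (Fin m → ℝ) × (Fin n → ℝ) × ℝ))
          (0, Pi.single i 1, 0) (x i) :=
        (hasDerivAt_const _ _).prodMk ((hasDerivAt_update x i (x i)).prodMk (hasDerivAt_const _ _))
      have h := deriv_clm_along' (fderiv ℝ f) hf2
        (((Pi.single j 1 : Fin m → ℝ), (0 : Fin n → ℝ), (0 : ℝ))) hc
      simp only [Function.update_eq_self] at h
      exact h
    have hmix : pdAt j (fun a' => pdAt i (fun x' => P a' x' y) x) a
        = pdAt i (fun x' => pdAt j (fun a' => P a' x' y) a) x := by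
      simp only [hE9g, hE8g]
      rw [hE9, hE8]
      exact hsym (a, x, y) _ _
    rw [hmix]
    exact key i j
  refine ⟨key, h2, ?_⟩
  rw [h2, rank_smul_ne' (neg_ne_zero.mpr hPy0), Matrix.rank_transpose]
end

section
/- Let Q: ℝ⁵ → ℝ be a smooth function of (x,y,a,b,c) with Q_c ≠ 0, and suppose det[[Q_a,Q_b,Q_c],[Q_{xa},Q_{xb},Q_{xc}],[Q_{xxa},Q_{xxb},Q_{xxc}]] ≠ 0 at a point. Then, at that point, the equality det[[Q_a,Q_b,Q_c],[Q_{ya},Q_{yb},Q_{yc}],[Q_{xxa},Q_{xxb},Q_{xxc}]] / det[[Q_a,Q_b,Q_c],[Q_{xa},Q_{xb},Q_{xc}],[Q_{xxa},Q_{xxb},Q_{xxc}]] = (−Q_c Q_{ya} + Q_a Q_{yc})/(−Q_c Q_{xa} + Q_a Q_{xc}) holds, provided that the 3×3 Levi determinant det[[Q_a,Q_b,Q_c],[Q_{xa},Q_{xb},Q_{xc}],[Q_{ya},Q_{yb},Q_{yc}]] vanishes and −Q_c Q_{xa} + Q_a Q_{xc} ≠ 0. -/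
/-- Functions of five real variables `(x,y,a,b,c)`. -/
abbrev F5 := ℝ → ℝ → ℝ → ℝ → ℝ → ℝ

noncomputable def dX (f : F5) : F5 := fun x y a b c => deriv (fun t => f t y a b c) x
noncomputable def dY (f : F5) : F5 := fun x y a b c => deriv (fun t => f x t a b c) y
noncomputable def dA (f : F5) : F5 := fun x y a b c => deriv (fun t => f x y t b c) a
noncomputable def dB (f : F5) : F5 := fun x y a b c => deriv (fun t => f x y a t c) b
noncomputable def dC (f : F5) : F5 := fun x y a b c => deriv (fun t => f x y a b t) c

/-- at a point where `Q_c ≠ 0`, `Δ(Q) ≠ 0`, `−Q_cQ_{xa}+Q_aQ_{xc} ≠ 0` and the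
3×3 Levi determinant vanishes, one has
`det[[Q_a,Q_b,Q_c],[Q_{ya},Q_{yb},Q_{yc}],[Q_{xxa},Q_{xxb},Q_{xxc}]] / Δ(Q)
  = (−Q_c Q_{ya} + Q_a Q_{yc})/(−Q_c Q_{xa} + Q_a Q_{xc})`. -/
theorem stmt_7 (Q : F5)
    (hQ : ContDiff ℝ (⊤ : ℕ∞) (fun p : ℝ × ℝ × ℝ × ℝ × ℝ => Q p.1 p.2.1 p.2.2.1 p.2.2.2.1 p.2.2.2.2))
    (x y a b c : ℝ)
    (hc : dC Q x y a b c ≠ 0)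
    (hΔ : Matrix.det
        !![dA Q x y a b c, dB Q x y a b c, dC Q x y a b c;
           dX (dA Q) x y a b c, dX (dB Q) x y a b c, dX (dC Q) x y a b c;
           dX (dX (dA Q)) x y a b c, dX (dX (dB Q)) x y a b c, dX (dX (dC Q)) x y a b c] ≠ 0)
    (hLevi : Matrix.det
        !![dA Q x y a b c, dB Q x y a b c, dC Q x y a b c;
           dX (dA Q) x y a b c, dX (dB Q) x y a b c, dX (dC Q) x y a b c;
           dY (dA Q) x y a b c, dY (dB Q) x y a b c, dY (dC Q) x y a b c] = 0)
    (hdenom : -(dC Q x y a b c) * dX (dA Q) x y a b c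
        + dA Q x y a b c * dX (dC Q) x y a b c ≠ 0) :
    Matrix.det
        !![dA Q x y a b c, dB Q x y a b c, dC Q x y a b c;
           dY (dA Q) x y a b c, dY (dB Q) x y a b c, dY (dC Q) x y a b c;
           dX (dX (dA Q)) x y a b c, dX (dX (dB Q)) x y a b c, dX (dX (dC Q)) x y a b c]
      / Matrix.det
        !![dA Q x y a b c, dB Q x y a b c, dC Q x y a b c;
           dX (dA Q) x y a b c, dX (dB Q) x y a b c, dX (dC Q) x y a b c;
           dX (dX (dA Q)) x y a b c, dX (dX (dB Q)) x y a b c, dX (dX (dC Q)) x y a b c]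
    = (-(dC Q x y a b c) * dY (dA Q) x y a b c + dA Q x y a b c * dY (dC Q) x y a b c)
      / (-(dC Q x y a b c) * dX (dA Q) x y a b c + dA Q x y a b c * dX (dC Q) x y a b c) := by
  rw [div_eq_div_iff hΔ hdenom]
  simp [Matrix.det_fin_three] at hLevi ⊢
  linear_combination (dC Q x y a b c * dX (dX (dA Q)) x y a b c
    - dA Q x y a b c * dX (dX (dC Q)) x y a b c) * hLevi
end

section
/- In the setting of the previous statement, if additionally the Levi determinant det[[Q_a,Q_b,Q_c],[Q_{xa},Q_{xb},Q_{xc}],[Q_{ya},Q_{yb},Q_{yc}]] = 0 at p, then A_{z_{xx}} Q_{ya} + B_{z_{xx}} Q_{yb} + C_{z_{xx}} Q_{yc} = 0. (This is the statement F_{z_{xx}} = 0: the associated PDE function F = Q_y(x,y,A,B,C) is independent of z_{xx} when the Levi form is degenerate of rank 1.) -/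
/-!
The nine equations say that the matrix `P` whose columns are `(A_z, A_{z_x}, A_{z_{xx}})`,
`(B_z, …)`, `(C_z, …)` inverts `Mᵀ`, where `M` has rows `Q_•, Q_{x•}, Q_{xx•}`. The Levi matrix
is `M` with its last row replaced by `Q_{y•}`, so by Cramer's rule the target
`(P *ᵥ Q_{y•}) 2` equals `det P` times the Levi determinant, which vanishes.
-/

namespace Matrix

variable {n R : Type*} [Fintype n] [DecidableEq n] [CommRing R]

theorem mulVec_apply_eq_det_mul_det_updateRow {M P : Matrix n n R} (h : Mᵀ * P = 1)
    (v : n → R) (i : n) : (P *ᵥ v) i = P.det * (M.updateRow i v).det := by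
  rw [← det_transpose (M.updateRow i v), ← det_mul, ← updateCol_transpose, mul_updateCol,
    mul_eq_one_comm.mp h, ← cramer_apply, cramer_one]
  rfl

end Matrix

open Matrix

theorem stmt_14_general (Qa Qb Qc Qxa Qxb Qxc Qxxa Qxxb Qxxc Qya Qyb Qyc : ℝ)
    (Az Azx Azxx Bz Bzx Bzxx Cz Czx Czxx : ℝ)
    (hA1 : Qa * Az + Qxa * Azx + Qxxa * Azxx = 1)
    (hA2 : Qb * Az + Qxb * Azx + Qxxb * Azxx = 0)
    (hA3 : Qc * Az + Qxc * Azx + Qxxc * Azxx = 0)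
    (hB1 : Qa * Bz + Qxa * Bzx + Qxxa * Bzxx = 0)
    (hB2 : Qb * Bz + Qxb * Bzx + Qxxb * Bzxx = 1)
    (hB3 : Qc * Bz + Qxc * Bzx + Qxxc * Bzxx = 0)
    (hC1 : Qa * Cz + Qxa * Czx + Qxxa * Czxx = 0)
    (hC2 : Qb * Cz + Qxb * Czx + Qxxb * Czxx = 0)
    (hC3 : Qc * Cz + Qxc * Czx + Qxxc * Czxx = 1)
    (hLevi : Matrix.det !![Qa, Qb, Qc; Qxa, Qxb, Qxc; Qya, Qyb, Qyc] = 0) :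
    Azxx * Qya + Bzxx * Qyb + Czxx * Qyc = 0 := by
  set M := !![Qa, Qb, Qc; Qxa, Qxb, Qxc; Qxxa, Qxxb, Qxxc]
  set P := !![Az, Bz, Cz; Azx, Bzx, Czx; Azxx, Bzxx, Czxx]
  have hinv : Mᵀ * P = 1 := by
    ext i j
    fin_cases i <;> fin_cases j <;> simp [M, P, mul_apply, Fin.sum_univ_three] <;> assumption
  have hLeviRow :
      M.updateRow 2 ![Qya, Qyb, Qyc] = !![Qa, Qb, Qc; Qxa, Qxb, Qxc; Qya, Qyb, Qyc] := by
    ext i j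
    fin_cases i <;> fin_cases j <;> rfl
  calc Azxx * Qya + Bzxx * Qyb + Czxx * Qyc = (P *ᵥ ![Qya, Qyb, Qyc]) 2 := by
        simp [P, mulVec, dotProduct, Fin.sum_univ_three]
    _ = P.det * (M.updateRow 2 ![Qya, Qyb, Qyc]).det :=
        mulVec_apply_eq_det_mul_det_updateRow hinv _ _
    _ = 0 := by rw [hLeviRow, hLevi, mul_zero]

/-- if in addition the Levi determinant vanishes at the point, then
`A_{z_{xx}} Q_{ya} + B_{z_{xx}} Q_{yb} + C_{z_{xx}} Q_{yc} = 0`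
(i.e. `F_{z_{xx}} = 0`: the associated PDE function is independent of `z_{xx}`). -/
theorem stmt_14 (Qa Qb Qc Qxa Qxb Qxc Qxxa Qxxb Qxxc Qya Qyb Qyc : ℝ)
    (Az Azx Azxx Bz Bzx Bzxx Cz Czx Czxx : ℝ)
    (hΔ : Matrix.det !![Qa, Qb, Qc; Qxa, Qxb, Qxc; Qxxa, Qxxb, Qxxc] ≠ 0)
    (hA1 : Qa * Az + Qxa * Azx + Qxxa * Azxx = 1)
    (hA2 : Qb * Az + Qxb * Azx + Qxxb * Azxx = 0)
    (hA3 : Qc * Az + Qxc * Azx + Qxxc * Azxx = 0)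
    (hB1 : Qa * Bz + Qxa * Bzx + Qxxa * Bzxx = 0)
    (hB2 : Qb * Bz + Qxb * Bzx + Qxxb * Bzxx = 1)
    (hB3 : Qc * Bz + Qxc * Bzx + Qxxc * Bzxx = 0)
    (hC1 : Qa * Cz + Qxa * Czx + Qxxa * Czxx = 0)
    (hC2 : Qb * Cz + Qxb * Czx + Qxxb * Czxx = 0)
    (hC3 : Qc * Cz + Qxc * Czx + Qxxc * Czxx = 1)
    (hLevi : Matrix.det !![Qa, Qb, Qc; Qxa, Qxb, Qxc; Qya, Qyb, Qyc] = 0) :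
    Azxx * Qya + Bzxx * Qyb + Czxx * Qyc = 0 :=
  stmt_14_general Qa Qb Qc Qxa Qxb Qxc Qxxa Qxxb Qxxc Qya Qyb Qyc Az Azx Azxx Bz Bzx Bzxx Cz Czx
    Czxx hA1 hA2 hA3 hB1 hB2 hB3 hC1 hC2 hC3 hLevi
end
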